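/- arXiv:2309.03873 — 3 statements merged into one kernel-verified Lean document; each statement's English description precedes it below -/
import Mathlib

section
/- Let W and W′ be independent σ²-sub-Gaussian random vectors in ℝᵈ and let G, G′ be independent standard Gaussian N(0, I_d) vectors. Then for every λ ∈ ℝ and every M ∈ ℝ^{d×d}, E[exp(λ·WᵀMW′)] ≤ E[exp(λσ²·GᵀMG′)]. -/
open MeasureTheory ProbabilityTheory Real

/-- The bilinear form `xᵀMy`. -/
def bilinForm {ι κ : Type*} [Fintype ι] [Fintype κ]
    (M : Matrix ι κ ℝ) (x : ι → ℝ) (y : κ → ℝ) : ℝ :=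
  ∑ i, ∑ j, x i * M i j * y j
lemma lintegral_pi_fin_prod {μ : Measure ℝ} [SigmaFinite μ] :
    ∀ {n : ℕ} (f : Fin n → ℝ → ENNReal), (∀ i, Measurable (f i)) →
    ∫⁻ x, ∏ i, f i (x i) ∂(Measure.pi fun _ : Fin n => μ) = ∏ i, ∫⁻ x, f i x ∂μ := by
  intro n
  induction n with
  | zero => intro f _; simp [lintegral_const]
  | succ n ih =>
    intro f hf
    have hmp := ((measurePreserving_piFinSuccAbove (fun _ : Fin (n + 1) => μ) 0).symm)
    rw [← hmp.lintegral_comp_emb (MeasurableEquiv.measurableEmbedding _)]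
    have heq : ∀ p : ℝ × (Fin n → ℝ),
        ∏ i, f i ((MeasurableEquiv.piFinSuccAbove (fun _ : Fin (n+1) => ℝ) 0).symm p i)
          = f 0 p.1 * ∏ i : Fin n, f i.succ (p.2 i) := by
      intro p
      rw [Fin.prod_univ_succ]
      simp [MeasurableEquiv.piFinSuccAbove_symm_apply, Fin.insertNthEquiv,
        Fin.insertNth_zero, Fin.zero_succAbove]
    simp_rw [heq]
    rw [lintegral_prod_mul (f := f 0) (g := fun y : Fin n → ℝ => ∏ i : Fin n, f i.succ (y i))
      (hf 0).aemeasurable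
      ((Finset.measurable_prod Finset.univ fun (i : Fin n) _ =>
        (hf i.succ).comp (measurable_pi_apply i)).aemeasurable)]
    rw [ih (fun i => f i.succ) fun i => hf i.succ, Fin.prod_univ_succ]
lemma gauss_mgf (t : ℝ) :
    ∫⁻ x, ENNReal.ofReal (Real.exp (t * x)) ∂(gaussianReal 0 1)
      = ENNReal.ofReal (Real.exp (t ^ 2 / 2)) := by
  rw [gaussianReal_of_var_ne_zero 0 one_ne_zero,
    lintegral_withDensity_eq_lintegral_mul _ (measurable_gaussianPDF 0 1)
      (by fun_prop)]
  have hpt : ∀ x : ℝ, (gaussianPDF 0 1 * fun x => ENNReal.ofReal (rexp (t * x))) x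
      = ENNReal.ofReal (rexp (t ^ 2 / 2)) * gaussianPDF t 1 x := by
    intro x
    simp only [Pi.mul_apply, gaussianPDF, ← ENNReal.ofReal_mul (gaussianPDFReal_nonneg 0 1 x),
      ← ENNReal.ofReal_mul (le_of_lt (exp_pos _))]
    congr 1
    simp only [gaussianPDFReal, NNReal.coe_one, mul_one, sub_zero]
    rw [mul_assoc, ← exp_add, show rexp (t ^ 2 / 2) * ((√(2 * π))⁻¹ * rexp (-(x - t) ^ 2 / 2))
        = (√(2 * π))⁻¹ * rexp (t ^ 2 / 2 + -(x - t) ^ 2 / 2) by rw [exp_add]; ring]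
    congr 1
    ring
  simp_rw [hpt]
  rw [lintegral_const_mul _ (measurable_gaussianPDF t 1),
    lintegral_gaussianPDF_eq_one t one_ne_zero, mul_one]

lemma gauss_pi {d : ℕ} (v : Fin d → ℝ) :
    ∫⁻ x, ENNReal.ofReal (Real.exp (∑ i, v i * x i))
        ∂(Measure.pi fun _ : Fin d => gaussianReal 0 1)
      = ENNReal.ofReal (Real.exp ((∑ i, v i ^ 2) / 2)) := by
  have h1 : ∀ x : Fin d → ℝ, ENNReal.ofReal (Real.exp (∑ i, v i * x i))
      = ∏ i, ENNReal.ofReal (Real.exp (v i * x i)) := by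
    intro x
    rw [Real.exp_sum, ENNReal.ofReal_prod_of_nonneg fun i _ => (exp_pos _).le]
  simp_rw [h1]
  rw [lintegral_pi_fin_prod (f := fun i t => ENNReal.ofReal (rexp (v i * t))) (fun i => by fun_prop)]
  simp_rw [gauss_mgf]
  rw [← ENNReal.ofReal_prod_of_nonneg fun i _ => (exp_pos _).le, ← Real.exp_sum,
    Finset.sum_div]

lemma indep_lintegral {Ω : Type*} [MeasureSpace Ω] [IsProbabilityMeasure (ℙ : Measure Ω)]
    {d : ℕ} {X Y : Ω → Fin d → ℝ} (hX : Measurable X) (hY : Measurable Y)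
    (h : ProbabilityTheory.IndepFun X Y (ℙ : Measure Ω))
    {f : (Fin d → ℝ) → (Fin d → ℝ) → ENNReal} (hf : Measurable (Function.uncurry f)) :
    ∫⁻ ω, f (X ω) (Y ω) ∂(ℙ : Measure Ω)
      = ∫⁻ x, ∫⁻ y, f x y ∂(Measure.map Y ℙ) ∂(Measure.map X ℙ) := by
  have hp : Measurable fun ω => (X ω, Y ω) := hX.prodMk hY
  have : ∫⁻ ω, f (X ω) (Y ω) ∂(ℙ : Measure Ω)
      = ∫⁻ p, Function.uncurry f p ∂(Measure.map (fun ω => (X ω, Y ω)) ℙ) := by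
    rw [lintegral_map hf hp]; rfl
  rw [this, (indepFun_iff_map_prod_eq_prod_map_map hX.aemeasurable hY.aemeasurable).mp h]
  have : IsProbabilityMeasure (Measure.map Y (ℙ : Measure Ω)) :=
    Measure.isProbabilityMeasure_map hY.aemeasurable
  exact lintegral_prod _ hf.aemeasurable

set_option maxHeartbeats 1000000 in
/-- Comparison to Gaussians: for independent `σ²`-sub-Gaussian vectors `W, W′` and
independent standard Gaussians `G, G′ ∼ N(0, I_d)`, for every `λ ∈ ℝ` and `M ∈ ℝ^{d×d}`,
`E[exp(λ WᵀMW′)] ≤ E[exp(λσ² GᵀMG′)]`. -/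
theorem subGaussian_chaos_gaussian_comparison {Ω : Type*} [MeasureSpace Ω]
    [IsProbabilityMeasure (ℙ : Measure Ω)]
    {d : ℕ} (σ : ℝ) (hσ : 0 < σ)
    (W W' G G' : Ω → Fin d → ℝ)
    (hWmeas : Measurable W) (hW'meas : Measurable W')
    (hGmeas : Measurable G) (hG'meas : Measurable G')
    (hWindep : IndepFun W W' (ℙ : Measure Ω))
    (hGindep : IndepFun G G' (ℙ : Measure Ω))
    (hG : Measure.map G (ℙ : Measure Ω) = Measure.pi fun _ : Fin d => gaussianReal 0 1)
    (hG' : Measure.map G' (ℙ : Measure Ω) = Measure.pi fun _ : Fin d => gaussianReal 0 1)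
    (hWsubG : ∀ v : Fin d → ℝ,
      ∫⁻ ω, ENNReal.ofReal (Real.exp (∑ i, v i * W ω i)) ∂(ℙ : Measure Ω)
        ≤ ENNReal.ofReal (Real.exp (σ ^ 2 * (∑ i, v i ^ 2) / 2)))
    (hW'subG : ∀ v : Fin d → ℝ,
      ∫⁻ ω, ENNReal.ofReal (Real.exp (∑ i, v i * W' ω i)) ∂(ℙ : Measure Ω)
        ≤ ENNReal.ofReal (Real.exp (σ ^ 2 * (∑ i, v i ^ 2) / 2))) :
    ∀ (l : ℝ) (M : Matrix (Fin d) (Fin d) ℝ),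
      ∫⁻ ω, ENNReal.ofReal (Real.exp (l * bilinForm M (W ω) (W' ω))) ∂(ℙ : Measure Ω)
        ≤ ∫⁻ ω, ENNReal.ofReal (Real.exp (l * σ ^ 2 * bilinForm M (G ω) (G' ω)))
            ∂(ℙ : Measure Ω) := by
  intro l M
  set ν : Measure (Fin d → ℝ) := Measure.map W ℙ with hν
  set ν' : Measure (Fin d → ℝ) := Measure.map W' ℙ with hν'
  set γ : Measure (Fin d → ℝ) := Measure.pi fun _ : Fin d => gaussianReal 0 1 with hγ
  have hνP : IsProbabilityMeasure ν := Measure.isProbabilityMeasure_map hWmeas.aemeasurable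
  have hν'P : IsProbabilityMeasure ν' := Measure.isProbabilityMeasure_map hW'meas.aemeasurable
  have hγP : IsProbabilityMeasure γ := by infer_instance
  -- measurability of the bilinear form
  have hbil : Measurable fun p : (Fin d → ℝ) × (Fin d → ℝ) => bilinForm M p.1 p.2 := by
    unfold bilinForm; fun_prop
  -- sub-Gaussian bounds transported to the law
  have hWm : ∀ v : Fin d → ℝ,
      ∫⁻ x, ENNReal.ofReal (Real.exp (∑ i, v i * x i)) ∂ν
        ≤ ENNReal.ofReal (Real.exp (σ ^ 2 * (∑ i, v i ^ 2) / 2)) := by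
    intro v
    rw [hν, lintegral_map (by fun_prop) hWmeas]
    exact hWsubG v
  have hW'm : ∀ v : Fin d → ℝ,
      ∫⁻ x, ENNReal.ofReal (Real.exp (∑ i, v i * x i)) ∂ν'
        ≤ ENNReal.ofReal (Real.exp (σ ^ 2 * (∑ i, v i ^ 2) / 2)) := by
    intro v
    rw [hν', lintegral_map (by fun_prop) hW'meas]
    exact hW'subG v
  -- sum rearrangement identities
  have hsum1 : ∀ (x y : Fin d → ℝ),
      l * bilinForm M x y = ∑ i, (l * ∑ j, M i j * y j) * x i := by
    intro x y
    simp only [bilinForm, Finset.mul_sum, Finset.sum_mul]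
    exact Finset.sum_congr rfl fun i _ => Finset.sum_congr rfl fun j _ => by ring
  have hsum2 : ∀ (x y : Fin d → ℝ),
      ∑ i, (σ * l * ∑ j, M i j * y j) * x i = ∑ j, (σ * l * ∑ i, x i * M i j) * y j := by
    intro x y
    simp only [Finset.mul_sum, Finset.sum_mul]
    rw [Finset.sum_comm]
    exact Finset.sum_congr rfl fun j _ => Finset.sum_congr rfl fun i _ => by ring
  have hsum3 : ∀ (x y : Fin d → ℝ),
      ∑ j, (σ ^ 2 * l * ∑ i, x i * M i j) * y j = l * σ ^ 2 * bilinForm M x y := by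
    intro x y
    simp only [bilinForm, Finset.mul_sum, Finset.sum_mul]
    rw [Finset.sum_comm]
    exact Finset.sum_congr rfl fun i _ => Finset.sum_congr rfl fun j _ => by ring
  calc
    ∫⁻ ω, ENNReal.ofReal (Real.exp (l * bilinForm M (W ω) (W' ω))) ∂(ℙ : Measure Ω)
        = ∫⁻ y, ∫⁻ x, ENNReal.ofReal (Real.exp (l * bilinForm M x y)) ∂ν ∂ν' := by
      exact indep_lintegral hW'meas hWmeas hWindep.symm
        (f := fun y x => ENNReal.ofReal (Real.exp (l * bilinForm M x y)))
        (by unfold Function.uncurry bilinForm; fun_prop)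
    _ ≤ ∫⁻ y, ENNReal.ofReal
          (Real.exp (σ ^ 2 * (∑ i, (l * ∑ j, M i j * y j) ^ 2) / 2)) ∂ν' := by
      refine lintegral_mono fun y => ?_
      calc ∫⁻ x, ENNReal.ofReal (Real.exp (l * bilinForm M x y)) ∂ν
          = ∫⁻ x, ENNReal.ofReal (Real.exp (∑ i, (l * ∑ j, M i j * y j) * x i)) ∂ν := by
            simp_rw [hsum1]
        _ ≤ _ := hWm _
    _ = ∫⁻ y, ∫⁻ x, ENNReal.ofReal
          (Real.exp (∑ i, (σ * l * ∑ j, M i j * y j) * x i)) ∂γ ∂ν' := by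
      refine lintegral_congr fun y => ?_
      rw [hγ, gauss_pi]
      congr 2
      rw [show (∑ i, (σ * l * ∑ j, M i j * y j) ^ 2)
          = σ ^ 2 * ∑ i, (l * ∑ j, M i j * y j) ^ 2 by
        rw [Finset.mul_sum]; exact Finset.sum_congr rfl fun i _ => by ring]
    _ = ∫⁻ x, ∫⁻ y, ENNReal.ofReal
          (Real.exp (∑ i, (σ * l * ∑ j, M i j * y j) * x i)) ∂ν' ∂γ := by
      refine lintegral_lintegral_swap (Measurable.aemeasurable ?_)
      unfold Function.uncurry
      fun_prop
    _ ≤ ∫⁻ x, ENNReal.ofReal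
          (Real.exp (σ ^ 2 * (∑ j, (σ * l * ∑ i, x i * M i j) ^ 2) / 2)) ∂γ := by
      refine lintegral_mono fun x => ?_
      calc ∫⁻ y, ENNReal.ofReal (Real.exp (∑ i, (σ * l * ∑ j, M i j * y j) * x i)) ∂ν'
          = ∫⁻ y, ENNReal.ofReal (Real.exp (∑ j, (σ * l * ∑ i, x i * M i j) * y j)) ∂ν' := by
            simp_rw [hsum2]
        _ ≤ _ := hW'm _
    _ = ∫⁻ x, ∫⁻ y, ENNReal.ofReal
          (Real.exp (∑ j, (σ ^ 2 * l * ∑ i, x i * M i j) * y j)) ∂γ ∂γ := by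
      refine lintegral_congr fun x => ?_
      rw [hγ, gauss_pi]
      congr 2
      rw [show (∑ j, (σ ^ 2 * l * ∑ i, x i * M i j) ^ 2)
          = σ ^ 2 * ∑ j, (σ * l * ∑ i, x i * M i j) ^ 2 by
        rw [Finset.mul_sum]; exact Finset.sum_congr rfl fun j _ => by ring]
    _ = ∫⁻ x, ∫⁻ y, ENNReal.ofReal
          (Real.exp (l * σ ^ 2 * bilinForm M x y)) ∂γ ∂γ := by
      refine lintegral_congr fun x => lintegral_congr fun y => ?_
      rw [hsum3]
    _ = ∫⁻ ω, ENNReal.ofReal (Real.exp (l * σ ^ 2 * bilinForm M (G ω) (G' ω)))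
          ∂(ℙ : Measure Ω) := by
      have h := indep_lintegral hGmeas hG'meas hGindep
        (f := fun x y => ENNReal.ofReal (Real.exp (l * σ ^ 2 * bilinForm M x y)))
        (by unfold Function.uncurry bilinForm; fun_prop)
      rw [hG, hG'] at h
      exact h.symm
end

section
/- Fix K ≥ 1, x ∈ ℝⁿ, and a symmetric positive semidefinite block matrix Q = [[Q₁₁, Q₁₂],[Q₂₁, Q₂₂]] ∈ ℝ^{(n+m)×(n+m)}. Let W be an m-dimensional, mean-zero, K²-sub-Gaussian random vector. Then for every λ ∈ [0, 1/(4K²‖Q₂₂‖_op)], E[exp(-λ·[x;W]ᵀQ[x;W])] ≤ √(E[exp(-2λ·WᵀQ₂₂W)]). -/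
open MeasureTheory ProbabilityTheory Real

/-- Operator (spectral) norm of a real matrix. -/
noncomputable def matOpNorm {ι κ : Type*} [Fintype ι] [Fintype κ]
    (M : Matrix ι κ ℝ) : ℝ :=
  sSup ((fun v => Real.sqrt (∑ i, M.mulVec v i ^ 2)) ''
    {v | Real.sqrt (∑ i, v i ^ 2) = 1})

/-- The quadratic form `xᵀMx`. -/
def quadForm {ι : Type*} [Fintype ι] (M : Matrix ι ι ℝ) (x : ι → ℝ) : ℝ :=
  ∑ i, ∑ j, x i * M i j * x j

lemma quadForm_eq_dot {ι : Type*} [Fintype ι] (M : Matrix ι ι ℝ) (y : ι → ℝ) :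
    quadForm M y = dotProduct y (M.mulVec y) := by
  simp [quadForm, dotProduct, Matrix.mulVec, Finset.mul_sum, mul_assoc]

lemma quadForm_nonneg {ι : Type*} [Fintype ι] [DecidableEq ι] {M : Matrix ι ι ℝ}
    (hM : M.PosSemidef) (y : ι → ℝ) : 0 ≤ quadForm M y := by
  rw [quadForm_eq_dot]
  have := hM.dotProduct_mulVec_nonneg y
  simpa using this

lemma quadForm_smul {ι : Type*} [Fintype ι] (M : Matrix ι ι ℝ) (t : ℝ) (y : ι → ℝ) :
    quadForm M (t • y) = t ^ 2 * quadForm M y := by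
  simp only [quadForm, Pi.smul_apply, smul_eq_mul, Finset.mul_sum]
  exact Finset.sum_congr rfl fun i _ => Finset.sum_congr rfl fun j _ => by ring

lemma cs_sum {ι : Type*} [Fintype ι] (f g : ι → ℝ) :
    ∑ i, f i * g i ≤ Real.sqrt (∑ i, f i ^ 2) * Real.sqrt (∑ i, g i ^ 2) := by
  calc ∑ i, f i * g i ≤ |∑ i, f i * g i| := le_abs_self _
    _ = Real.sqrt ((∑ i, f i * g i) ^ 2) := (Real.sqrt_sq_eq_abs _).symm
    _ ≤ Real.sqrt ((∑ i, f i ^ 2) * ∑ i, g i ^ 2) :=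
        Real.sqrt_le_sqrt (Finset.sum_mul_sq_le_sq_mul_sq _ _ _)
    _ = _ := Real.sqrt_mul (by positivity) _

lemma quadForm_le_opNorm {m : ℕ} (M : Matrix (Fin m) (Fin m) ℝ) (b : Fin m → ℝ) :
    quadForm M b ≤ matOpNorm M * ∑ i, b i ^ 2 := by
  have hbdd : BddAbove ((fun v => Real.sqrt (∑ i, M.mulVec v i ^ 2)) ''
      {v | Real.sqrt (∑ i, v i ^ 2) = 1}) := by
    refine ⟨Real.sqrt (∑ i, ∑ j, M i j ^ 2), ?_⟩
    rintro y ⟨v, hv, rfl⟩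
    have hv1 : ∑ i, v i ^ 2 = 1 := by
      have h := congrArg (fun t => t ^ 2) hv
      simpa [Real.sq_sqrt (by positivity : (0:ℝ) ≤ ∑ i, v i ^ 2)] using h
    apply Real.sqrt_le_sqrt
    refine Finset.sum_le_sum fun i _ => ?_
    have : M.mulVec v i = ∑ j, M i j * v j := by
      simp [Matrix.mulVec, dotProduct]
    rw [this]
    calc (∑ j, M i j * v j) ^ 2 ≤ (∑ j, M i j ^ 2) * ∑ j, v j ^ 2 :=
          Finset.sum_mul_sq_le_sq_mul_sq _ _ _
      _ = ∑ j, M i j ^ 2 := by rw [hv1, mul_one]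
  by_cases hb : ∑ i, b i ^ 2 = 0
  · have hb0 : ∀ i, b i = 0 := by
      intro i
      have := (Finset.sum_eq_zero_iff_of_nonneg (fun j _ => sq_nonneg (b j))).mp hb i
        (Finset.mem_univ i)
      exact pow_eq_zero_iff (n := 2) (by norm_num) |>.mp this
    simp [quadForm, hb0, hb]
  · have hB : 0 < ∑ i, b i ^ 2 := lt_of_le_of_ne (by positivity) (Ne.symm hb)
    set r := Real.sqrt (∑ i, b i ^ 2) with hr
    have hrpos : 0 < r := Real.sqrt_pos.mpr hB
    have hr2 : r ^ 2 = ∑ i, b i ^ 2 := Real.sq_sqrt hB.le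
    set v : Fin m → ℝ := r⁻¹ • b with hvdef
    have hvmem : Real.sqrt (∑ i, v i ^ 2) = 1 := by
      have : ∑ i, v i ^ 2 = r⁻¹ ^ 2 * ∑ i, b i ^ 2 := by
        simp [hvdef, Finset.mul_sum, mul_pow]
      rw [this, Real.sqrt_mul (sq_nonneg _), Real.sqrt_sq (inv_nonneg.mpr hrpos.le), ← hr]
      field_simp
    have hMv : Real.sqrt (∑ i, M.mulVec v i ^ 2) ≤ matOpNorm M :=
      le_csSup hbdd ⟨v, hvmem, rfl⟩
    have hqv : quadForm M v ≤ matOpNorm M := by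
      rw [quadForm_eq_dot]
      calc dotProduct v (M.mulVec v) = ∑ i, v i * M.mulVec v i := rfl
        _ ≤ Real.sqrt (∑ i, v i ^ 2) * Real.sqrt (∑ i, M.mulVec v i ^ 2) := cs_sum _ _
        _ = Real.sqrt (∑ i, M.mulVec v i ^ 2) := by rw [hvmem, one_mul]
        _ ≤ matOpNorm M := hMv
    have hbv : b = r • v := by
      rw [hvdef, smul_smul, mul_inv_cancel₀ hrpos.ne', one_smul]
    calc quadForm M b = r ^ 2 * quadForm M v := by rw [hbv, quadForm_smul]
      _ ≤ r ^ 2 * matOpNorm M := by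
          apply mul_le_mul_of_nonneg_left hqv (by positivity)
      _ = matOpNorm M * ∑ i, b i ^ 2 := by rw [hr2]; ring

/-- Sub-Gaussian decoupling: for `K ≥ 1`, `x ∈ ℝⁿ`, a symmetric PSD block matrix
`Q = [[Q₁₁, Q₁₂],[Q₂₁, Q₂₂]]` and a mean-zero `K²`-sub-Gaussian vector `W ∈ ℝᵐ`,
for every `λ ∈ [0, 1/(4K²‖Q₂₂‖_op)]`,
`E[exp(-λ [x;W]ᵀ Q [x;W])] ≤ √(E[exp(-2λ WᵀQ₂₂W)])`. -/
theorem subGaussian_decoupling {Ω : Type*} [MeasureSpace Ω]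
    [IsProbabilityMeasure (ℙ : Measure Ω)]
    {n m : ℕ} (K : ℝ) (hK : 1 ≤ K) (x : Fin n → ℝ)
    (Q : Matrix (Fin n ⊕ Fin m) (Fin n ⊕ Fin m) ℝ) (hQ : Q.PosSemidef)
    (W : Ω → Fin m → ℝ) (hWmeas : Measurable W)
    (hint : ∀ i, Integrable (fun ω => W ω i) (ℙ : Measure Ω))
    (hmean : ∀ i, ∫ ω, W ω i ∂(ℙ : Measure Ω) = 0)
    (hsubG : ∀ v : Fin m → ℝ,
      ∫⁻ ω, ENNReal.ofReal (Real.exp (∑ i, v i * W ω i)) ∂(ℙ : Measure Ω)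
        ≤ ENNReal.ofReal (Real.exp (K ^ 2 * (∑ i, v i ^ 2) / 2))) :
    ∀ l : ℝ, l ∈ Set.Icc 0 (1 / (4 * K ^ 2 * matOpNorm Q.toBlocks₂₂)) →
      ∫⁻ ω, ENNReal.ofReal (Real.exp (-l * quadForm Q (Sum.elim x (W ω)))) ∂(ℙ : Measure Ω)
        ≤ (∫⁻ ω, ENNReal.ofReal (Real.exp (-2 * l * quadForm Q.toBlocks₂₂ (W ω)))
              ∂(ℙ : Measure Ω)) ^ (1 / 2 : ℝ) := by
  intro l hl
  obtain ⟨hl0, hlN⟩ := hl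
  set N := matOpNorm Q.toBlocks₂₂ with hN
  set a := quadForm Q.toBlocks₁₁ x with ha
  set b : Fin m → ℝ := fun i => ∑ j, x j * Q (Sum.inl j) (Sum.inr i) with hbdef
  set c : Fin m → ℝ := fun i => 2 * b i with hcdef
  set B := ∑ i, b i ^ 2 with hBdef
  set C := ∑ i, c i ^ 2 with hCdef
  have hsym : ∀ i j, Q (Sum.inr i) (Sum.inl j) = Q (Sum.inl j) (Sum.inr i) := by
    intro i j
    have h := congrFun (congrFun hQ.1 (Sum.inr i)) (Sum.inl j)
    simpa [Matrix.conjTranspose_apply] using h.symm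
  -- decomposition
  have hdecomp : ∀ w : Fin m → ℝ, quadForm Q (Sum.elim x w)
      = a + (∑ i, c i * w i) + quadForm Q.toBlocks₂₂ w := by
    intro w
    have h21 : ∑ i, ∑ j, w i * Q (Sum.inr i) (Sum.inl j) * x j
        = ∑ j, ∑ i, x j * Q (Sum.inl j) (Sum.inr i) * w i := by
      rw [Finset.sum_comm]
      exact Finset.sum_congr rfl fun j _ => Finset.sum_congr rfl fun i _ => by
        rw [hsym]; ring
    have hc : ∑ i, c i * w i = 2 * ∑ j, ∑ i, x j * Q (Sum.inl j) (Sum.inr i) * w i := by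
      rw [Finset.sum_comm]
      rw [Finset.mul_sum]
      refine Finset.sum_congr rfl fun i _ => ?_
      simp only [hcdef, hbdef, Finset.mul_sum, Finset.sum_mul]
      exact Finset.sum_congr rfl fun j _ => by ring
    simp only [quadForm, Fintype.sum_sum_type, Sum.elim_inl, Sum.elim_inr,
      Matrix.toBlocks₁₁, Matrix.toBlocks₂₂, Matrix.of_apply] at *
    rw [Finset.sum_add_distrib, Finset.sum_add_distrib, h21, hc, ← ha]
    ring
  have ha0 : 0 ≤ a := by
    have h0 := quadForm_nonneg hQ (Sum.elim x (0 : Fin m → ℝ))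
    rw [hdecomp 0] at h0
    have hq0 : quadForm Q.toBlocks₂₂ (0 : Fin m → ℝ) = 0 := by simp [quadForm]
    simpa [hq0] using h0
  have hCB : C = 4 * B := by
    rw [hCdef, hBdef, Finset.mul_sum]
    exact Finset.sum_congr rfl fun i _ => by rw [hcdef]; ring
  have key : K ^ 2 * l ^ 2 * C ≤ l * a := by
    rcases eq_or_lt_of_le hl0 with h | hlpos
    · simp [← h]
    have hK2 : (0:ℝ) < K ^ 2 := by positivity
    have hNpos : 0 < N := by
      by_contra h
      push_neg at h
      have hz : 4 * K ^ 2 * N ≤ 0 := by nlinarith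
      have : 1 / (4 * K ^ 2 * N) ≤ 0 := div_nonpos_of_nonneg_of_nonpos zero_le_one hz
      linarith
    have hqb : quadForm Q.toBlocks₂₂ b ≤ N * B := quadForm_le_opNorm _ b
    have h0 := quadForm_nonneg hQ (Sum.elim x ((-(1/N)) • b))
    rw [hdecomp] at h0
    have hsum : ∑ i, c i * ((-(1/N)) • b) i = -(1/N) * (2 * B) := by
      rw [hBdef, Finset.mul_sum, Finset.mul_sum]
      exact Finset.sum_congr rfl fun i _ => by
        simp only [Pi.smul_apply, smul_eq_mul, hcdef]; ring
    rw [hsum, quadForm_smul] at h0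
    have hNne : (N:ℝ) ≠ 0 := ne_of_gt hNpos
    have h0' : 0 ≤ N ^ 2 * a - 2 * N * B + quadForm Q.toBlocks₂₂ b := by
      have h2 := mul_nonneg (sq_nonneg N) h0
      calc (0:ℝ) ≤ _ := h2
        _ = N ^ 2 * a - 2 * N * B + quadForm Q.toBlocks₂₂ b := by field_simp; ring
    have hBa : B ≤ N * a := by nlinarith [h0', hqb, hNpos]
    have h1 : l * (4 * K ^ 2 * N) ≤ 1 := by
      rw [← le_div_iff₀ (by positivity)]
      exact hlN
    rw [hCB]
    nlinarith [mul_le_mul_of_nonneg_left hBa (by positivity : (0:ℝ) ≤ 4 * K ^ 2 * l ^ 2),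
      mul_le_mul_of_nonneg_right h1 (mul_nonneg hl0 ha0)]
  -- measurability
  have hWi : ∀ i, Measurable fun ω => W ω i := fun i => (measurable_pi_apply i).comp hWmeas
  have hmeas_s : Measurable fun ω => ∑ i, c i * W ω i :=
    Finset.measurable_sum _ fun i _ => (hWi i).const_mul (c i)
  have hmeas_q : Measurable fun ω => quadForm Q.toBlocks₂₂ (W ω) := by
    unfold quadForm
    exact Finset.measurable_sum _ fun i _ => Finset.measurable_sum _ fun j _ =>
      ((hWi i).mul_const _).mul (hWi j)
  set f : Ω → ENNReal := fun ω => ENNReal.ofReal (Real.exp (-l * ∑ i, c i * W ω i)) with hfdef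
  set g : Ω → ENNReal :=
    fun ω => ENNReal.ofReal (Real.exp (-l * quadForm Q.toBlocks₂₂ (W ω))) with hgdef
  have hfm : Measurable f := ENNReal.measurable_ofReal.comp (hmeas_s.const_mul (-l)).exp
  have hgm : Measurable g := ENNReal.measurable_ofReal.comp (hmeas_q.const_mul (-l)).exp
  -- step 1: factor out the constant
  have step1 : ∫⁻ ω, ENNReal.ofReal (Real.exp (-l * quadForm Q (Sum.elim x (W ω)))) ∂ℙ
      = ENNReal.ofReal (Real.exp (-l * a)) * ∫⁻ ω, f ω * g ω ∂ℙ := by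
    rw [← lintegral_const_mul' _ _ ENNReal.ofReal_ne_top]
    refine lintegral_congr fun ω => ?_
    rw [hdecomp (W ω), hfdef, hgdef]
    have harg : -l * (a + (∑ i, c i * W ω i) + quadForm Q.toBlocks₂₂ (W ω))
        = -l * a + (-l * ∑ i, c i * W ω i + -l * quadForm Q.toBlocks₂₂ (W ω)) := by ring
    rw [harg, Real.exp_add, Real.exp_add, ENNReal.ofReal_mul (Real.exp_pos _).le,
      ENNReal.ofReal_mul (Real.exp_pos _).le]
  -- rpow computations
  have hf2 : ∀ ω, f ω ^ (2:ℝ) = ENNReal.ofReal (Real.exp (∑ i, (-2 * l * c i) * W ω i)) := by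
    intro ω
    rw [hfdef, ENNReal.ofReal_rpow_of_pos (Real.exp_pos _), ← Real.exp_mul]
    congr 1
    rw [Real.exp_eq_exp]
    calc (-l * ∑ i, c i * W ω i) * 2 = (-2 * l) * ∑ i, c i * W ω i := by ring
      _ = ∑ i, (-2 * l) * (c i * W ω i) := Finset.mul_sum _ _ _
      _ = ∑ i, (-2 * l * c i) * W ω i := Finset.sum_congr rfl fun i _ => by ring
  have hg2 : ∀ ω, g ω ^ (2:ℝ)
      = ENNReal.ofReal (Real.exp (-2 * l * quadForm Q.toBlocks₂₂ (W ω))) := by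
    intro ω
    rw [hgdef, ENNReal.ofReal_rpow_of_pos (Real.exp_pos _), ← Real.exp_mul]
    congr 1
    ring
  -- Hölder
  have hold : ∫⁻ ω, f ω * g ω ∂ℙ
      ≤ (∫⁻ ω, f ω ^ (2:ℝ) ∂ℙ) ^ (1/2:ℝ) * (∫⁻ ω, g ω ^ (2:ℝ) ∂ℙ) ^ (1/2:ℝ) := by
    have h22 : Real.HolderConjugate 2 2 := Real.HolderConjugate.two_two
    simpa using ENNReal.lintegral_mul_le_Lp_mul_Lq ℙ h22 hfm.aemeasurable hgm.aemeasurable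
  -- bound the first factor via sub-Gaussianity
  have hFbound : (∫⁻ ω, f ω ^ (2:ℝ) ∂ℙ) ^ (1/2:ℝ)
      ≤ ENNReal.ofReal (Real.exp (K ^ 2 * l ^ 2 * C)) := by
    have hsum2 : ∑ i, (-2 * l * c i) ^ 2 = 4 * l ^ 2 * C := by
      rw [hCdef, Finset.mul_sum]
      exact Finset.sum_congr rfl fun i _ => by ring
    have hb1 : ∫⁻ ω, f ω ^ (2:ℝ) ∂ℙ
        ≤ ENNReal.ofReal (Real.exp (2 * K ^ 2 * l ^ 2 * C)) := by
      calc ∫⁻ ω, f ω ^ (2:ℝ) ∂ℙ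
          = ∫⁻ ω, ENNReal.ofReal (Real.exp (∑ i, (-2 * l * c i) * W ω i)) ∂ℙ :=
            lintegral_congr fun ω => hf2 ω
        _ ≤ ENNReal.ofReal (Real.exp (K ^ 2 * (∑ i, (-2 * l * c i) ^ 2) / 2)) :=
            hsubG _
        _ = ENNReal.ofReal (Real.exp (2 * K ^ 2 * l ^ 2 * C)) := by
            rw [hsum2]; congr 1; ring
    calc (∫⁻ ω, f ω ^ (2:ℝ) ∂ℙ) ^ (1/2:ℝ)
        ≤ (ENNReal.ofReal (Real.exp (2 * K ^ 2 * l ^ 2 * C))) ^ (1/2:ℝ) :=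
          ENNReal.rpow_le_rpow hb1 (by norm_num)
      _ = ENNReal.ofReal (Real.exp (K ^ 2 * l ^ 2 * C)) := by
          rw [ENNReal.ofReal_rpow_of_pos (Real.exp_pos _), ← Real.exp_mul]
          congr 1
          ring
  have hEone : ENNReal.ofReal (Real.exp (-l * a))
      * ENNReal.ofReal (Real.exp (K ^ 2 * l ^ 2 * C)) ≤ 1 := by
    rw [← ENNReal.ofReal_mul (Real.exp_pos _).le, ← Real.exp_add]
    calc ENNReal.ofReal (Real.exp (-l * a + K ^ 2 * l ^ 2 * C))
        ≤ ENNReal.ofReal (Real.exp 0) :=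
          ENNReal.ofReal_le_ofReal (Real.exp_le_exp.mpr (by linarith [key]))
      _ = 1 := by simp
  calc ∫⁻ ω, ENNReal.ofReal (Real.exp (-l * quadForm Q (Sum.elim x (W ω)))) ∂ℙ
      = ENNReal.ofReal (Real.exp (-l * a)) * ∫⁻ ω, f ω * g ω ∂ℙ := step1
    _ ≤ ENNReal.ofReal (Real.exp (-l * a))
        * ((∫⁻ ω, f ω ^ (2:ℝ) ∂ℙ) ^ (1/2:ℝ) * (∫⁻ ω, g ω ^ (2:ℝ) ∂ℙ) ^ (1/2:ℝ)) :=
        mul_le_mul_right hold _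
    _ = (ENNReal.ofReal (Real.exp (-l * a)) * (∫⁻ ω, f ω ^ (2:ℝ) ∂ℙ) ^ (1/2:ℝ))
        * (∫⁻ ω, g ω ^ (2:ℝ) ∂ℙ) ^ (1/2:ℝ) := (mul_assoc _ _ _).symm
    _ ≤ (ENNReal.ofReal (Real.exp (-l * a))
        * ENNReal.ofReal (Real.exp (K ^ 2 * l ^ 2 * C)))
        * (∫⁻ ω, g ω ^ (2:ℝ) ∂ℙ) ^ (1/2:ℝ) :=
        mul_le_mul_left (mul_le_mul_right hFbound _) _
    _ ≤ 1 * (∫⁻ ω, g ω ^ (2:ℝ) ∂ℙ) ^ (1/2:ℝ) := mul_le_mul_left hEone _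
    _ = (∫⁻ ω, ENNReal.ofReal (Real.exp (-2 * l * quadForm Q.toBlocks₂₂ (W ω))) ∂ℙ)
        ^ (1/2:ℝ) := by
        rw [one_mul]
        congr 1
        exact lintegral_congr fun ω => hg2 ω
end

section
/- Let A ∈ ℝ^{d×d} have all eigenvalues of modulus at most 1 and operator norm ‖A‖_op ≤ M for some M > 0. Then for every positive integer k, ‖Aᵏ‖_op ≤ (e·k)^{d-1}·max(Mᵈ, 1). -/
set_option maxHeartbeats 1000000
set_option synthInstance.maxHeartbeats 400000

open Real Matrix

namespace PowAux

open Polynomial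

noncomputable def clm {𝕜 : Type*} [RCLike 𝕜] {n : ℕ} (X : Matrix (Fin n) (Fin n) 𝕜) :
    EuclideanSpace 𝕜 (Fin n) →L[𝕜] EuclideanSpace 𝕜 (Fin n) :=
  Matrix.toEuclideanCLM (𝕜 := 𝕜) X

variable {n : ℕ}

lemma clm_apply {𝕜 : Type*} [RCLike 𝕜] (X : Matrix (Fin n) (Fin n) 𝕜)
    (v : Fin n → 𝕜) :
    clm X ((WithLp.equiv 2 (Fin n → 𝕜)).symm v) =
      (WithLp.equiv 2 (Fin n → 𝕜)).symm (X.mulVec v) := by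
  simp [clm]

lemma norm_symm (v : Fin n → ℝ) :
    ‖(WithLp.equiv 2 (Fin n → ℝ)).symm v‖ = Real.sqrt (∑ i, v i ^ 2) := by
  rw [EuclideanSpace.norm_eq]
  congr 1
  refine Finset.sum_congr rfl fun i _ => ?_
  simp [Real.norm_eq_abs, sq_abs]

lemma matOpNorm_eq (X : Matrix (Fin n) (Fin n) ℝ) : matOpNorm X = ‖clm X‖ := by
  rcases Nat.eq_zero_or_pos n with hn | hn
  · subst hn
    have h1 : {v : Fin 0 → ℝ | Real.sqrt (∑ i, v i ^ 2) = 1} = ∅ := by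
      ext v; simp
    have h2 : clm X = 0 := ContinuousLinearMap.ext fun x => Subsingleton.elim _ _
    simp only [matOpNorm, h1, Set.image_empty, Real.sSup_empty, h2, norm_zero]
  · -- n > 0
    set S := ((fun v => Real.sqrt (∑ i, X.mulVec v i ^ 2)) ''
      {v | Real.sqrt (∑ i, v i ^ 2) = 1}) with hS
    have key : ∀ v : Fin n → ℝ,
        Real.sqrt (∑ i, X.mulVec v i ^ 2) = ‖clm X ((WithLp.equiv 2 (Fin n → ℝ)).symm v)‖ := by
      intro v; rw [clm_apply, norm_symm]
    have hub : ∀ x ∈ S, x ≤ ‖clm X‖ := by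
      rintro _ ⟨v, hv, rfl⟩
      dsimp only
      rw [key v]
      calc ‖clm X ((WithLp.equiv 2 (Fin n → ℝ)).symm v)‖
          ≤ ‖clm X‖ * ‖(WithLp.equiv 2 (Fin n → ℝ)).symm v‖ := (clm X).le_opNorm _
        _ = ‖clm X‖ := by rw [norm_symm, hv, mul_one]
    have hbdd : BddAbove S := ⟨‖clm X‖, hub⟩
    refine le_antisymm (Real.sSup_le hub (norm_nonneg _)) ?_
    refine (clm X).opNorm_le_bound ?_ ?_
    · -- 0 ≤ sSup S : S contains a nonneg element
      have hmem : Real.sqrt (∑ i, X.mulVec (fun j => if j = ⟨0, hn⟩ then 1 else 0) i ^ 2) ∈ S := by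
        refine ⟨_, ?_, rfl⟩
        simp only [Set.mem_setOf_eq]
        rw [show (∑ i, (if i = (⟨0, hn⟩ : Fin n) then (1:ℝ) else 0) ^ 2) = 1 by simp]
        exact Real.sqrt_one
      exact le_csSup_of_le hbdd hmem (Real.sqrt_nonneg _)
    · intro w
      rcases eq_or_ne w 0 with rfl | hw
      · simp
      · have hnw : ‖w‖ ≠ 0 := norm_ne_zero_iff.mpr hw
        set u : EuclideanSpace ℝ (Fin n) := ‖w‖⁻¹ • w with hu
        have hnu : ‖u‖ = 1 := by
          rw [hu, norm_smul, norm_inv, norm_norm, inv_mul_cancel₀ hnw]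
        have humem : ‖clm X u‖ ∈ S := by
          refine ⟨WithLp.equiv 2 (Fin n → ℝ) u, ?_, ?_⟩
          · simp only [Set.mem_setOf_eq]
            rw [← norm_symm]
            simpa using hnu
          · dsimp only
            rw [key]
            simp
        have : ‖clm X u‖ ≤ sSup S := le_csSup hbdd humem
        have hcu : clm X u = ‖w‖⁻¹ • clm X w := by rw [hu, (clm X).map_smul]
        rw [hcu, norm_smul, norm_inv, norm_norm] at this
        calc ‖clm X w‖ = ‖w‖ * (‖w‖⁻¹ * ‖clm X w‖) := by
              field_simp
          _ ≤ ‖w‖ * sSup S := by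
              exact mul_le_mul_of_nonneg_left this (norm_nonneg _)
          _ = sSup S * ‖w‖ := mul_comm _ _



lemma norm_symm_c (v : Fin n → ℂ) :
    ‖(WithLp.equiv 2 (Fin n → ℂ)).symm v‖ = Real.sqrt (∑ i, ‖v i‖ ^ 2) := by
  rw [EuclideanSpace.norm_eq]
  rfl

lemma mulVec_map (X : Matrix (Fin n) (Fin n) ℝ) (v : Fin n → ℝ) :
    (X.map (algebraMap ℝ ℂ)).mulVec (fun j => (v j : ℂ)) =
      fun i => ((X.mulVec v i : ℝ) : ℂ) := by
  funext i
  simp [Matrix.mulVec, dotProduct, Matrix.map_apply]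

lemma le_clm_map (X : Matrix (Fin n) (Fin n) ℝ) :
    ‖clm X‖ ≤ ‖clm (X.map (algebraMap ℝ ℂ))‖ := by
  refine ContinuousLinearMap.opNorm_le_bound _ (norm_nonneg _) fun w => ?_
  set v : Fin n → ℝ := WithLp.equiv 2 (Fin n → ℝ) w with hv
  have hw : w = (WithLp.equiv 2 (Fin n → ℝ)).symm v := by
    rw [hv]; exact (Equiv.symm_apply_apply _ _).symm
  have hnc : ∀ u : Fin n → ℝ,
      ‖(WithLp.equiv 2 (Fin n → ℂ)).symm (fun i => (u i : ℂ))‖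
        = ‖(WithLp.equiv 2 (Fin n → ℝ)).symm u‖ := by
    intro u
    rw [norm_symm_c, norm_symm]
    congr 1
    refine Finset.sum_congr rfl fun i _ => ?_
    rw [Complex.norm_real, Real.norm_eq_abs, sq_abs]
  calc ‖clm X w‖ = ‖(WithLp.equiv 2 (Fin n → ℝ)).symm (X.mulVec v)‖ := by
        rw [hw, clm_apply]
    _ = ‖(WithLp.equiv 2 (Fin n → ℂ)).symm (fun i => ((X.mulVec v i : ℝ) : ℂ))‖ := (hnc _).symm
    _ = ‖clm (X.map (algebraMap ℝ ℂ)) ((WithLp.equiv 2 (Fin n → ℂ)).symm (fun j => (v j : ℂ)))‖ := by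
        rw [clm_apply, mulVec_map]
    _ ≤ ‖clm (X.map (algebraMap ℝ ℂ))‖ * ‖(WithLp.equiv 2 (Fin n → ℂ)).symm (fun j => (v j : ℂ))‖ :=
        ContinuousLinearMap.le_opNorm _ _
    _ = ‖clm (X.map (algebraMap ℝ ℂ))‖ * ‖w‖ := by rw [hnc, ← hw]

lemma clm_map_le (X : Matrix (Fin n) (Fin n) ℝ) :
    ‖clm (X.map (algebraMap ℝ ℂ))‖ ≤ ‖clm X‖ := by
  refine ContinuousLinearMap.opNorm_le_bound _ (norm_nonneg _) fun w => ?_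
  set w' : Fin n → ℂ := WithLp.equiv 2 (Fin n → ℂ) w with hw'
  have hw : w = (WithLp.equiv 2 (Fin n → ℂ)).symm w' := by
    rw [hw']; exact (Equiv.symm_apply_apply _ _).symm
  set u : Fin n → ℝ := fun i => (w' i).re with hu
  set v : Fin n → ℝ := fun i => (w' i).im with hvdef
  -- entries of the complex image
  have hre : ∀ i, ((X.map (algebraMap ℝ ℂ)).mulVec w' i).re = X.mulVec u i := by
    intro i
    simp [Matrix.mulVec, dotProduct, Matrix.map_apply, Complex.re_sum, Complex.mul_re, hu]
  have him : ∀ i, ((X.map (algebraMap ℝ ℂ)).mulVec w' i).im = X.mulVec v i := by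
    intro i
    simp [Matrix.mulVec, dotProduct, Matrix.map_apply, Complex.im_sum, Complex.mul_im, hvdef]
  have hsq : ∀ z : ℂ, ‖z‖ ^ 2 = z.re ^ 2 + z.im ^ 2 := by
    intro z
    rw [Complex.sq_norm, Complex.normSq_apply]
    ring
  have h1 : ‖clm (X.map (algebraMap ℝ ℂ)) w‖ ^ 2
      = (∑ i, X.mulVec u i ^ 2) + (∑ i, X.mulVec v i ^ 2) := by
    rw [hw, clm_apply, norm_symm_c, Real.sq_sqrt (by positivity)]
    rw [← Finset.sum_add_distrib]
    refine Finset.sum_congr rfl fun i _ => ?_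
    rw [hsq, hre, him]
  have h2 : ‖w‖ ^ 2 = (∑ i, u i ^ 2) + (∑ i, v i ^ 2) := by
    rw [hw, norm_symm_c, Real.sq_sqrt (by positivity), ← Finset.sum_add_distrib]
    refine Finset.sum_congr rfl fun i _ => ?_
    rw [hsq]
  have hXu : ∑ i, X.mulVec u i ^ 2 ≤ ‖clm X‖ ^ 2 * ∑ i, u i ^ 2 := by
    have := ContinuousLinearMap.le_opNorm (clm X) ((WithLp.equiv 2 (Fin n → ℝ)).symm u)
    rw [clm_apply, norm_symm, norm_symm] at this
    have h := mul_self_le_mul_self (Real.sqrt_nonneg _) this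
    rw [← Real.sqrt_mul_self (Real.sqrt_nonneg (∑ i, X.mulVec u i ^ 2))] at h
    calc ∑ i, X.mulVec u i ^ 2
        = Real.sqrt (∑ i, X.mulVec u i ^ 2) * Real.sqrt (∑ i, X.mulVec u i ^ 2) := by
          rw [Real.mul_self_sqrt (by positivity)]
      _ ≤ (‖clm X‖ * Real.sqrt (∑ i, u i ^ 2)) * (‖clm X‖ * Real.sqrt (∑ i, u i ^ 2)) :=
          mul_self_le_mul_self (Real.sqrt_nonneg _) this
      _ = ‖clm X‖ ^ 2 * ∑ i, u i ^ 2 := by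
          rw [show (‖clm X‖ * Real.sqrt (∑ i, u i ^ 2)) * (‖clm X‖ * Real.sqrt (∑ i, u i ^ 2))
              = (‖clm X‖ * ‖clm X‖) * (Real.sqrt (∑ i, u i ^ 2) * Real.sqrt (∑ i, u i ^ 2)) by ring]
          rw [Real.mul_self_sqrt (by positivity)]
          ring
  have hXv : ∑ i, X.mulVec v i ^ 2 ≤ ‖clm X‖ ^ 2 * ∑ i, v i ^ 2 := by
    have this := ContinuousLinearMap.le_opNorm (clm X) ((WithLp.equiv 2 (Fin n → ℝ)).symm v)
    rw [clm_apply, norm_symm, norm_symm] at this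
    calc ∑ i, X.mulVec v i ^ 2
        = Real.sqrt (∑ i, X.mulVec v i ^ 2) * Real.sqrt (∑ i, X.mulVec v i ^ 2) := by
          rw [Real.mul_self_sqrt (by positivity)]
      _ ≤ (‖clm X‖ * Real.sqrt (∑ i, v i ^ 2)) * (‖clm X‖ * Real.sqrt (∑ i, v i ^ 2)) :=
          mul_self_le_mul_self (Real.sqrt_nonneg _) this
      _ = ‖clm X‖ ^ 2 * ∑ i, v i ^ 2 := by
          rw [show (‖clm X‖ * Real.sqrt (∑ i, v i ^ 2)) * (‖clm X‖ * Real.sqrt (∑ i, v i ^ 2))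
              = (‖clm X‖ * ‖clm X‖) * (Real.sqrt (∑ i, v i ^ 2) * Real.sqrt (∑ i, v i ^ 2)) by ring]
          rw [Real.mul_self_sqrt (by positivity)]
          ring
  have hfin : ‖clm (X.map (algebraMap ℝ ℂ)) w‖ ^ 2 ≤ (‖clm X‖ * ‖w‖) ^ 2 := by
    rw [h1, mul_pow, h2, mul_add]
    exact add_le_add hXu hXv
  have h0 : (0:ℝ) ≤ ‖clm X‖ * ‖w‖ := by positivity
  exact (pow_le_pow_iff_left₀ (norm_nonneg _) h0 (by norm_num)).mp hfin



variable {𝕜 : Type*} [RCLike 𝕜]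

lemma clm_mul (X Y : Matrix (Fin n) (Fin n) 𝕜) : clm (X * Y) = clm X * clm Y :=
  _root_.map_mul _ _ _

lemma clm_one : clm (1 : Matrix (Fin n) (Fin n) 𝕜) = 1 := _root_.map_one _

lemma clm_sub (X Y : Matrix (Fin n) (Fin n) 𝕜) : clm (X - Y) = clm X - clm Y :=
  _root_.map_sub _ _ _

lemma clm_pow (X : Matrix (Fin n) (Fin n) 𝕜) (m : ℕ) : clm (X ^ m) = clm X ^ m :=
  _root_.map_pow _ _ _

lemma clm_smul (c : 𝕜) (X : Matrix (Fin n) (Fin n) 𝕜) : clm (c • X) = c • clm X := by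
  unfold clm
  exact _root_.map_smul _ _ _

lemma clm_sum {α : Type*} (s : Finset α) (f : α → Matrix (Fin n) (Fin n) 𝕜) :
    clm (∑ a ∈ s, f a) = ∑ a ∈ s, clm (f a) :=
  _root_.map_sum _ _ _

lemma norm_clm_one_le : ‖clm (1 : Matrix (Fin n) (Fin n) 𝕜)‖ ≤ 1 := by
  rw [clm_one, ContinuousLinearMap.one_def]
  exact ContinuousLinearMap.norm_id_le

lemma mem_spectrum_of_root (B : Matrix (Fin n) (Fin n) ℂ) {μ : ℂ}
    (h : B.charpoly.IsRoot μ) : μ ∈ spectrum ℂ B := by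
  rw [spectrum.mem_iff]
  intro hunit
  have hdet : B.charpoly.eval μ = (algebraMap ℂ (Matrix (Fin n) (Fin n) ℂ) μ - B).det := by
    rw [Matrix.charpoly, show (Polynomial.eval μ) = ⇑(Polynomial.evalRingHom μ) from rfl,
      RingHom.map_det]
    congr 1
    ext i j
    by_cases hij : i = j
    · subst hij
      simp [Matrix.charmatrix_apply_eq, Algebra.algebraMap_eq_smul_one,
        Matrix.sub_apply, Matrix.smul_apply, Matrix.one_apply]
    · simp [Matrix.charmatrix_apply_ne _ _ _ hij, Algebra.algebraMap_eq_smul_one,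
        Matrix.sub_apply, Matrix.smul_apply, Matrix.one_apply_ne hij]
  rw [Matrix.isUnit_iff_isUnit_det, ← hdet, h] at hunit
  exact not_isUnit_zero hunit

noncomputable def coeffs (lam : ℕ → ℂ) : ℕ → ℕ → ℂ
  | 0, 0 => 1
  | 0, _+1 => 0
  | k+1, 0 => lam 0 * coeffs lam k 0
  | k+1, j+1 => lam (j+1) * coeffs lam k (j+1) + coeffs lam k j

lemma abs_coeffs_le (lam : ℕ → ℂ) :
    ∀ k j, (∀ i ≤ j, ‖lam i‖ ≤ 1) →
      ‖coeffs lam k j‖ ≤ (k.choose j : ℝ) := by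
  intro k
  induction k with
  | zero =>
    intro j hj
    match j with
    | 0 => simp [coeffs]
    | j+1 => simp [coeffs]
  | succ k ih =>
    intro j hj
    match j with
    | 0 =>
      rw [coeffs, norm_mul]
      calc ‖lam 0‖ * ‖coeffs lam k 0‖
          ≤ 1 * (k.choose 0 : ℝ) :=
            mul_le_mul (hj 0 le_rfl) (ih 0 hj) (norm_nonneg _) zero_le_one
        _ = ((k+1).choose 0 : ℝ) := by simp
    | j+1 =>
      rw [coeffs]
      calc ‖lam (j+1) * coeffs lam k (j+1) + coeffs lam k j‖
          ≤ ‖lam (j+1) * coeffs lam k (j+1)‖ + ‖coeffs lam k j‖ :=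
            norm_add_le _ _
        _ ≤ 1 * (k.choose (j+1) : ℝ) + (k.choose j : ℝ) := by
            refine add_le_add ?_ (ih j fun i hi => hj i (hi.trans (Nat.le_succ _)))
            rw [norm_mul]
            exact mul_le_mul (hj (j+1) le_rfl) (ih (j+1) hj) (norm_nonneg _) zero_le_one
        _ = ((k+1).choose (j+1) : ℝ) := by
            rw [one_mul, Nat.choose_succ_succ, Nat.cast_add, add_comm]

lemma key_bound (B : Matrix (Fin n) (Fin n) ℂ) (hn : 0 < n)
    (hspec : ∀ μ ∈ spectrum ℂ B, ‖μ‖ ≤ 1)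
    {R : ℝ} (hB : ‖clm B‖ ≤ R) (k : ℕ) :
    ‖clm (B ^ k)‖ ≤ ∑ j ∈ Finset.range n, (k.choose j : ℝ) * (R + 1) ^ j := by
  have hR : (0:ℝ) ≤ R := le_trans (norm_nonneg _) hB
  have hsplits : B.charpoly.Splits := IsAlgClosed.splits _
  have hdeg : B.charpoly.natDegree = n := by
    rw [Matrix.charpoly_natDegree_eq_dim, Fintype.card_fin]
  have hcard : Multiset.card B.charpoly.roots = n := by
    rw [(Polynomial.splits_iff_card_roots).mp hsplits, hdeg]
  set l : List ℂ := B.charpoly.roots.toList with hl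
  have hlen : l.length = n := by rw [hl, Multiset.length_toList, hcard]
  set lam : ℕ → ℂ := fun i => l.getD i 0 with hlamdef
  have hlam : ∀ i, i < n → ‖lam i‖ ≤ 1 := by
    intro i hi
    apply hspec
    apply mem_spectrum_of_root
    apply Polynomial.isRoot_of_mem_roots
    rw [← Multiset.mem_toList, ← hl]
    have hilt : i < l.length := hlen ▸ hi
    rw [hlamdef]
    dsimp only
    rw [List.getD_eq_getElem l 0 hilt]
    exact List.getElem_mem _
  set P : ℕ → Polynomial ℂ := fun j => ((List.range j).map (fun i => X - C (lam i))).prod with hP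
  set E : ℕ → Matrix (Fin n) (Fin n) ℂ := fun j => Polynomial.aeval B (P j) with hE
  have hE0 : E 0 = 1 := by simp [hE, hP]
  have hPsucc : ∀ j, P (j+1) = P j * (X - C (lam j)) := by
    intro j
    rw [hP]
    dsimp only
    rw [List.range_succ, List.map_append, List.prod_append]
    simp
  have hEsucc : ∀ j, E (j+1) = E j * (B - lam j • 1) := by
    intro j
    rw [hE]
    dsimp only
    rw [hPsucc, _root_.map_mul, _root_.map_sub, aeval_X, aeval_C,
      Algebra.algebraMap_eq_smul_one]
  have hcommB : ∀ p : Polynomial ℂ, B * Polynomial.aeval B p = Polynomial.aeval B p * B := by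
    intro p
    calc B * Polynomial.aeval B p = Polynomial.aeval B (X * p) := by
          rw [_root_.map_mul, aeval_X]
      _ = Polynomial.aeval B (p * X) := by rw [mul_comm]
      _ = Polynomial.aeval B p * B := by rw [_root_.map_mul, aeval_X]
  have hBE : ∀ j, B * E j = E (j+1) + lam j • E j := by
    intro j
    have h2 : E j * (B - lam j • 1) = E j * B - lam j • E j := by
      rw [mul_sub, mul_smul_comm, mul_one]
    rw [hEsucc j, h2, sub_add_cancel]
    rw [hE]
    exact hcommB (P j)
  have hmapeq : (List.range n).map (fun i => X - C (lam i)) = l.map (fun a => X - C a) := by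
    apply List.ext_getElem
    · simp [hlen]
    · intro i h1 h2
      simp only [List.getElem_map, List.getElem_range]
      have h2' : i < l.length := by simpa using h2
      have : lam i = l[i] := List.getD_eq_getElem l 0 h2'
      rw [this]
  have hPn : P n = B.charpoly := by
    rw [hP]
    dsimp only
    rw [hmapeq]
    have hfact := prod_multiset_X_sub_C_of_monic_of_roots_card_eq B.charpoly_monic
      (by rw [hcard, hdeg])
    rw [← hfact, ← Multiset.coe_toList B.charpoly.roots, Multiset.map_coe, Multiset.prod_coe, hl]
  have hEn : E n = 0 := by
    rw [hE]
    dsimp only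
    rw [hPn]
    exact Matrix.aeval_self_charpoly B
  have hrep : ∀ m : ℕ, B ^ m = ∑ j ∈ Finset.range n, coeffs lam m j • E j := by
    intro m
    induction m with
    | zero =>
      rw [pow_zero, Finset.sum_eq_single 0]
      · rw [show coeffs lam 0 0 = 1 from rfl, hE0, one_smul]
      · intro j _ hj0
        match j, hj0 with
        | j+1, _ => rw [show coeffs lam 0 (j+1) = 0 from rfl, zero_smul]
      · intro h
        exact absurd (Finset.mem_range.mpr hn) h
    | succ m ih =>
      have step : ∀ j ∈ Finset.range n, B * (coeffs lam m j • E j)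
          = coeffs lam m j • E (j+1) + (lam j * coeffs lam m j) • E j := by
        intro j _
        rw [mul_smul_comm, hBE j, smul_add, smul_smul, mul_comm (coeffs lam m j) (lam j)]
      rw [pow_succ', ih, Finset.mul_sum, Finset.sum_congr rfl step, Finset.sum_add_distrib]
      have h1 : ∑ j ∈ Finset.range n, coeffs lam m j • E (j+1)
          = ∑ j ∈ Finset.range n, (if j = 0 then 0 else coeffs lam m (j-1)) • E j := by
        have e1 := Finset.sum_range_succ'
          (fun j => (if j = 0 then (0:ℂ) else coeffs lam m (j-1)) • E j) n
        rw [Finset.sum_range_succ] at e1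
        simp only [hEn, smul_zero, add_zero, if_pos rfl, zero_smul, Nat.succ_ne_zero,
          if_false, if_true, eq_self_iff_true, Nat.add_sub_cancel] at e1
        exact e1.symm
      rw [h1, ← Finset.sum_add_distrib]
      refine Finset.sum_congr rfl fun j _ => ?_
      rw [← add_smul]
      congr 1
      match j with
      | 0 => rw [show coeffs lam (m+1) 0 = lam 0 * coeffs lam m 0 from rfl]; simp
      | j+1 =>
        rw [show coeffs lam (m+1) (j+1) = lam (j+1) * coeffs lam m (j+1) + coeffs lam m j from rfl]
        simp [add_comm]
  have hnormE : ∀ j, j ≤ n → ‖clm (E j)‖ ≤ (R + 1) ^ j := by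
    intro j
    induction j with
    | zero =>
      intro _
      rw [hE0, pow_zero]
      exact norm_clm_one_le
    | succ j ih =>
      intro hj
      rw [hEsucc j, clm_mul, pow_succ]
      refine le_trans (norm_mul_le _ _) (mul_le_mul (ih (le_of_lt hj)) ?_ (norm_nonneg _)
        (by positivity))
      rw [clm_sub]
      refine le_trans (norm_sub_le _ _) ?_
      refine add_le_add hB ?_
      rw [clm_smul]
      refine le_trans (ContinuousLinearMap.opNorm_smul_le _ _) ?_
      calc ‖lam j‖ * ‖clm (1 : Matrix (Fin n) (Fin n) ℂ)‖ ≤ 1 * 1 := by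
            refine mul_le_mul ?_ norm_clm_one_le (norm_nonneg _) zero_le_one
            exact hlam j (lt_of_lt_of_le (Nat.lt_succ_self j) hj)
        _ = 1 := one_mul 1
  have habs : ∀ k' j, j < n → ‖coeffs lam k' j‖ ≤ (k'.choose j : ℝ) := by
    intro k' j hj
    apply abs_coeffs_le
    intro i hi
    exact hlam i (lt_of_le_of_lt hi hj)
  rw [hrep k, clm_sum]

  refine le_trans (norm_sum_le _ _) (Finset.sum_le_sum fun j hj => ?_)
  rw [clm_smul]
  refine le_trans (ContinuousLinearMap.opNorm_smul_le _ _) ?_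
  refine mul_le_mul ?_ (hnormE j (le_of_lt (Finset.mem_range.mp hj))) (norm_nonneg _)
    (Nat.cast_nonneg _)
  exact habs k j (Finset.mem_range.mp hj)



lemma two_pow_le_fact (m : ℕ) : 2^m ≤ Nat.factorial (m+1) := by
  induction m with
  | zero => simp
  | succ m ih =>
    calc 2^(m+1) = 2 * 2^m := by ring
      _ ≤ 2 * Nat.factorial (m+1) := by omega
      _ ≤ (m+2) * Nat.factorial (m+1) := by
          exact Nat.mul_le_mul_right _ (by omega)
      _ = Nat.factorial (m+2) := rfl

lemma choose_le_pow_div (k j : ℕ) : (k.choose j : ℝ) ≤ (k:ℝ)^j / (Nat.factorial j) := by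
  rw [le_div_iff₀ (by positivity : (0:ℝ) < (Nat.factorial j : ℝ))]
  have hnat : k.choose j * Nat.factorial j ≤ k ^ j := by
    rw [mul_comm, ← Nat.descFactorial_eq_factorial_mul_choose]
    exact Nat.descFactorial_le_pow _ _
  exact_mod_cast hnat

lemma sum_exp_bound (x : ℝ) (hx : 2 ≤ x) : ∀ m : ℕ,
    ∑ j ∈ Finset.range (m+1), (2*x)^j / (Nat.factorial j) ≤ (Real.exp 1 * x)^m := by
  have hx0 : (0:ℝ) < x := lt_of_lt_of_le two_pos hx
  have he : (2.5:ℝ) ≤ Real.exp 1 := by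
    have := Real.exp_one_gt_d9
    linarith
  intro m
  induction m with
  | zero => simp
  | succ m ih =>
    rw [Finset.sum_range_succ]
    have hterm : (2*x)^(m+1) / (Nat.factorial (m+1)) ≤ 2 * x^(m+1) := by
      rw [mul_pow, div_le_iff₀ (by positivity)]
      have hnat : (2:ℝ)^m ≤ (Nat.factorial (m+1) : ℝ) := by
        exact_mod_cast two_pow_le_fact m
      calc (2:ℝ)^(m+1) * x^(m+1) = (2 * 2^m) * x^(m+1) := by ring
        _ ≤ (2 * (Nat.factorial (m+1) : ℝ)) * x^(m+1) := by
            have : (0:ℝ) ≤ x^(m+1) := by positivity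
            nlinarith
        _ = 2 * x^(m+1) * (Nat.factorial (m+1) : ℝ) := by ring
    have key : (Real.exp 1 * x)^m + 2 * x^(m+1) ≤ (Real.exp 1 * x)^(m+1) := by
      have hem : (1:ℝ) ≤ (Real.exp 1)^m := one_le_pow₀ (by linarith)
      have hxm : (0:ℝ) < x^m := by positivity
      have e1 : (Real.exp 1 * x)^m = (Real.exp 1)^m * x^m := by rw [mul_pow]
      have e2 : (Real.exp 1 * x)^(m+1) = (Real.exp 1)^m * Real.exp 1 * (x^m * x) := by
        rw [mul_pow, pow_succ, pow_succ]
      have e3 : x^(m+1) = x^m * x := pow_succ x m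
      rw [e1, e2, e3]
      nlinarith [mul_pos hxm hx0, mul_le_mul_of_nonneg_left hx (le_of_lt hxm),
        mul_le_mul_of_nonneg_right he (le_of_lt hxm),
        mul_le_mul_of_nonneg_right hem (le_of_lt (mul_pos hxm hx0))]
    calc ∑ j ∈ Finset.range (m+1), (2*x)^j / (Nat.factorial j) + (2*x)^(m+1) / (Nat.factorial (m+1))
        ≤ (Real.exp 1 * x)^m + 2 * x^(m+1) := add_le_add ih hterm
      _ ≤ (Real.exp 1 * x)^(m+1) := key


end PowAux

/-- Powers of non-explosive matrices grow at most polynomially: if all (complex)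
eigenvalues of `A ∈ ℝ^{d×d}` have modulus at most `1` and `‖A‖_op ≤ M` with `M > 0`,
then for every positive integer `k`, `‖Aᵏ‖_op ≤ (e·k)^{d-1} · max(Mᵈ, 1)`. -/
theorem opNorm_pow_le_of_nonexplosive {d : ℕ} (A : Matrix (Fin d) (Fin d) ℝ)
    (hspec : ∀ μ ∈ spectrum ℂ (A.map (algebraMap ℝ ℂ)), ‖μ‖ ≤ 1)
    (M : ℝ) (hM : 0 < M) (hA : matOpNorm A ≤ M) :
    ∀ k : ℕ, 0 < k →
      matOpNorm (A ^ k) ≤ (Real.exp 1 * k) ^ (d - 1) * max (M ^ d) 1 := by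
  intro k hk
  rw [PowAux.matOpNorm_eq]
  rw [PowAux.matOpNorm_eq] at hA
  have he1 : (1:ℝ) ≤ Real.exp 1 := by
    have := Real.exp_one_gt_d9
    linarith
  have hk1 : (1:ℝ) ≤ (k:ℝ) := by exact_mod_cast hk
  have hek : (1:ℝ) ≤ Real.exp 1 * k := by nlinarith
  have hpow1 : (1:ℝ) ≤ (Real.exp 1 * k) ^ (d-1) := one_le_pow₀ hek
  have hmax1 : (1:ℝ) ≤ max (M^d) 1 := le_max_right _ _
  rcases Nat.eq_zero_or_pos d with hd0 | hd
  · subst hd0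
    have hz : PowAux.clm (A ^ k) = 0 := ContinuousLinearMap.ext fun x => Subsingleton.elim _ _
    rw [hz, norm_zero]
    nlinarith
  by_cases hkd : k ≤ d
  · have h1 : ‖PowAux.clm (A ^ k)‖ ≤ M ^ k := by
      rw [PowAux.clm_pow]
      refine le_trans (norm_pow_le' _ hk) ?_
      exact pow_le_pow_left₀ (norm_nonneg _) hA k
    have h2 : M ^ k ≤ max (M ^ d) 1 := by
      rcases le_total M 1 with hM1 | hM1
      · exact le_trans (pow_le_one₀ (le_of_lt hM) hM1) (le_max_right _ _)
      · exact le_trans (pow_le_pow_right₀ hM1 hkd) (le_max_left _ _)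
    calc ‖PowAux.clm (A^k)‖ ≤ M ^ k := h1
      _ ≤ max (M^d) 1 := h2
      _ = 1 * max (M^d) 1 := (one_mul _).symm
      _ ≤ (Real.exp 1 * k)^(d-1) * max (M^d) 1 :=
          mul_le_mul_of_nonneg_right hpow1 (by linarith)
  · push_neg at hkd
    have hk2 : (2:ℝ) ≤ (k:ℝ) := by exact_mod_cast (by omega : 2 ≤ k)
    set B := A.map (algebraMap ℝ ℂ) with hB
    have hBk : (A ^ k).map (algebraMap ℝ ℂ) = B ^ k := by
      rw [hB, ← RingHom.mapMatrix_apply, ← RingHom.mapMatrix_apply, map_pow]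
    have hnB : ‖PowAux.clm B‖ ≤ M := le_trans (PowAux.clm_map_le A) hA
    have hstep : ‖PowAux.clm (A ^ k)‖ ≤ ∑ j ∈ Finset.range d, (k.choose j : ℝ) * (M+1)^j := by
      refine le_trans (PowAux.le_clm_map (A^k)) ?_
      rw [hBk]
      exact PowAux.key_bound B hd hspec hnB k
    refine le_trans hstep ?_
    set c := max M 1 with hc
    have hc1 : (1:ℝ) ≤ c := le_max_right _ _
    have hMc : M ≤ c := le_max_left _ _
    have hcd : max (M^d) 1 = c^d := by
      rcases le_total M 1 with h | h
      · rw [hc, max_eq_right h, max_eq_right (pow_le_one₀ (le_of_lt hM) h), one_pow]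
      · rw [hc, max_eq_left h, max_eq_left (one_le_pow₀ h)]
    have hterm : ∀ j ∈ Finset.range d, (k.choose j : ℝ) * (M+1)^j
        ≤ (2*(k:ℝ))^j / (Nat.factorial j) * c^(d-1) := by
      intro j hj
      have hj' : j ≤ d - 1 := by
        have := Finset.mem_range.mp hj
        omega
      calc (k.choose j : ℝ) * (M+1)^j
          ≤ ((k:ℝ)^j / Nat.factorial j) * (2*c)^j := by
            refine mul_le_mul (PowAux.choose_le_pow_div k j)
              (pow_le_pow_left₀ (by linarith) (by linarith) j) (by positivity) (by positivity)
        _ = (2*(k:ℝ))^j / Nat.factorial j * c^j := by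
            rw [mul_pow, mul_pow]
            ring
        _ ≤ (2*(k:ℝ))^j / Nat.factorial j * c^(d-1) :=
            mul_le_mul_of_nonneg_left (pow_le_pow_right₀ hc1 hj') (by positivity)
    calc ∑ j ∈ Finset.range d, (k.choose j : ℝ) * (M+1)^j
        ≤ ∑ j ∈ Finset.range d, (2*(k:ℝ))^j / (Nat.factorial j) * c^(d-1) :=
          Finset.sum_le_sum hterm
      _ = (∑ j ∈ Finset.range d, (2*(k:ℝ))^j / (Nat.factorial j)) * c^(d-1) := by
          rw [Finset.sum_mul]
      _ ≤ (Real.exp 1 * k)^(d-1) * c^(d-1) := by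
          refine mul_le_mul_of_nonneg_right ?_ (by positivity)
          have hsum := PowAux.sum_exp_bound (k:ℝ) hk2 (d-1)
          rwa [show d - 1 + 1 = d from by omega] at hsum
      _ ≤ (Real.exp 1 * k)^(d-1) * c^d :=
          mul_le_mul_of_nonneg_left (pow_le_pow_right₀ hc1 (by omega)) (by positivity)
      _ = (Real.exp 1 * k)^(d-1) * max (M^d) 1 := by rw [hcd]
end
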